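/- Let a and b be Laurent polynomials over ℂ having symmetry with types ε_a z^{c_a} and ε_b z^{c_b}, and suppose b ≠ 0. (i) If ε_aε_b = 1, or if ε_aε_b = −1 and c_a − c_b is odd, then there exists a Laurent polynomial q having symmetry with type ε_aε_b z^{c_a−c_b} such that r(z) := a(z) − b(z)q(z) has symmetry with type ε_a z^{c_a} and len(r) < len(b). (ii) If ε_aε_b = −1 and c_a − c_b is even, then there exists a Laurent polynomial q having symmetry with type ε_aε_b z^{c_a−c_b} such that r(z) := a(z) − b(z)q(z) has symmetry with type ε_a z^{c_a} and len(r) ≤ len(b). -/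

import Mathlib

open LaurentPolynomial Matrix
open scoped Classical

noncomputable section

abbrev LP := LaurentPolynomial ℂ

namespace QT

/-- The coefficient of `z^k` in a Laurent polynomial. -/
def coeff (u : LP) (k : ℤ) : ℂ := (show ℤ →₀ ℂ from AddMonoidAlgebra.coeff u) k

/-- The Hermitian conjugate `u⋆(z) = Σ conj(u(k)) z^{-k}`. -/
def hstar (u : LP) : LP :=
  AddMonoidAlgebra.ofCoeff <| show ℤ →₀ ℂ from
    Finsupp.mapDomain (fun k => -k)
      (Finsupp.mapRange (starRingEnd ℂ) (map_zero _) (show ℤ →₀ ℂ from AddMonoidAlgebra.coeff u))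

/-- `u` has symmetry with type `ε z^c`, i.e. `u(k) = ε u(c-k)` for all `k`. -/
def SymT (u : LP) (ε : ℂ) (c : ℤ) : Prop := ∀ k : ℤ, coeff u k = ε * coeff u (c - k)

def Sgn (ε : ℂ) : Prop := ε = 1 ∨ ε = -1

/-- `u` has symmetry (with some type). -/
def HasSym (u : LP) : Prop := ∃ ε c, Sgn ε ∧ SymT u ε c

/-- The Laurent polynomial `z - a`. -/
def zsub (a : ℂ) : LP := T 1 - LaurentPolynomial.C a

/-- `m` is the multiplicity of `z₀` as a zero of `u`. -/
def mzIs (u : LP) (z₀ : ℂ) (m : ℕ) : Prop := zsub z₀ ^ m ∣ u ∧ ¬ zsub z₀ ^ (m + 1) ∣ u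

/-- The multiplicity of `z₀` as a zero of `u`, as a function. -/
def mzF (u : LP) (z₀ : ℂ) : ℕ := sSup {m : ℕ | zsub z₀ ^ m ∣ u}

/-- The difference-of-(Hermitian)-squares property with respect to symmetry type `ε z^c`. -/
def DOS (u : LP) (ε : ℂ) (c : ℤ) : Prop :=
  ∃ (u₁ u₂ : LP) (ε₁ ε₂ : ℂ) (c₁ c₂ : ℤ),
    Sgn ε₁ ∧ Sgn ε₂ ∧ SymT u₁ ε₁ c₁ ∧ SymT u₂ ε₂ c₂ ∧
    u₁ * hstar u₁ - u₂ * hstar u₂ = u ∧ ε₁ * ε₂ = ε ∧ c₁ - c₂ = c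

/-- Degree: the largest exponent with nonzero coefficient (0 for the zero polynomial). -/
def degL (u : LP) : ℤ :=
  if h : u = 0 then 0
  else (show ℤ →₀ ℂ from AddMonoidAlgebra.coeff u).support.max' (Finsupp.support_nonempty_iff.mpr (AddMonoidAlgebra.coeff_eq_zero.not.mpr h))

/-- Lower degree: the smallest exponent with nonzero coefficient (0 for zero). -/
def ldegL (u : LP) : ℤ :=
  if h : u = 0 then 0
  else (show ℤ →₀ ℂ from AddMonoidAlgebra.coeff u).support.min' (Finsupp.support_nonempty_iff.mpr (AddMonoidAlgebra.coeff_eq_zero.not.mpr h))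

/-- Length `deg - ldeg`, with `len 0 = ⊥`. -/
def lenL (u : LP) : WithBot ℤ := if u = 0 then ⊥ else ((degL u - ldegL u : ℤ) : WithBot ℤ)

/-- `g` is a greatest common divisor of `a` and `b`. -/
def IsGCD2 (g a b : LP) : Prop := g ∣ a ∧ g ∣ b ∧ ∀ e : LP, e ∣ a → e ∣ b → e ∣ g

/-- `g` is a greatest common divisor of `a`, `b`, `c`, `d`. -/
def IsGCD4 (g a b c d : LP) : Prop :=
  g ∣ a ∧ g ∣ b ∧ g ∣ c ∧ g ∣ d ∧ ∀ e : LP, e ∣ a → e ∣ b → e ∣ c → e ∣ d → e ∣ g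

/-- The Hermitian conjugate transpose of a matrix of Laurent polynomials. -/
def hstarM (A : Matrix (Fin 2) (Fin 2) LP) : Matrix (Fin 2) (Fin 2) LP :=
  fun i j => hstar (A j i)

def IsHerm (A : Matrix (Fin 2) (Fin 2) LP) : Prop := hstarM A = A

/-- `diag(1, -1)`. -/
def Jmat : Matrix (Fin 2) (Fin 2) LP := Matrix.diagonal ![1, -1]

/-- A square matrix of Laurent polynomials is strongly invertible if its determinant is a
nonzero monomial. -/
def StrongInv (A : Matrix (Fin 2) (Fin 2) LP) : Prop :=
  ∃ (lam : ℂ) (k : ℤ), lam ≠ 0 ∧ A.det = LaurentPolynomial.C lam * T k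

/-- Compatible symmetry for a `2×2` matrix of Laurent polynomials. -/
def CompatSym (A : Matrix (Fin 2) (Fin 2) LP) : Prop :=
  ∃ (ε ε' : Fin 2 → ℂ) (c c' : Fin 2 → ℤ),
    (∀ j, Sgn (ε j)) ∧ (∀ k, Sgn (ε' k)) ∧
    ∀ j k, SymT (A j k) (ε j * ε' k) (c' k - c j)

/-- Substitution `z ↦ z²`. -/
def sqDom (u : LP) : LP :=
  AddMonoidAlgebra.ofCoeff <| show ℤ →₀ ℂ from Finsupp.mapDomain (fun k => 2 * k) (show ℤ →₀ ℂ from AddMonoidAlgebra.coeff u)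

/-- Substitution `z ↦ -z`. -/
def negSub (u : LP) : LP :=
  (show ℤ →₀ ℂ from AddMonoidAlgebra.coeff u).sum fun k c => show LP from AddMonoidAlgebra.ofCoeff <| Finsupp.single k ((-1 : ℂ) ^ k * c)

/-- The `γ`-coset `u^{[γ]}(z) = Σ_k u(γ + 2k) z^k`. -/
def cosetL (u : LP) (γ : ℤ) : LP :=
  AddMonoidAlgebra.ofCoeff <| show ℤ →₀ ℂ from
    Finsupp.comapDomain (fun k : ℤ => γ + 2 * k) (show ℤ →₀ ℂ from AddMonoidAlgebra.coeff u)
      (by intro a _ b _ h; simp only at h; omega)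

/-- Evaluation of a Laurent polynomial at a point. -/
def evalL (u : LP) (z : ℂ) : ℂ := (show ℤ →₀ ℂ from AddMonoidAlgebra.coeff u).sum fun k c => c * z ^ k

/-- `{a; b₁, b₂}_{Θ,(1,-1)}` is a quasi-tight framelet filter bank. -/
def QTFB (a Θ b₁ b₂ : LP) : Prop :=
  sqDom Θ * hstar a * a + hstar b₁ * b₁ - hstar b₂ * b₂ = Θ ∧
  sqDom Θ * hstar a * negSub a + hstar b₁ * negSub b₁ - hstar b₂ * negSub b₂ = 0

/-- The matrix `N_{a,Θ|n_b}` built from the quotients `A`, `B`. -/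
def Nmat (A B : LP) : Matrix (Fin 2) (Fin 2) LP :=
  LaurentPolynomial.C (2 : ℂ)⁻¹ •
    !![cosetL A 0 + cosetL B 0, cosetL A 1 - cosetL B 1;
       T 1 * (cosetL A 1 + cosetL B 1), cosetL A 0 - cosetL B 0]

/-! Cancelling the top coefficient of a symmetric remainder `r` by `b * m`, where `m` is the
symmetrized monomial `t (z^e + ε_a ε_b z^{c_a - c_b - e})` with `e = deg r - deg b`, keeps `r`
symmetric; by that symmetry the bottom coefficient is cancelled as well, so `len r` drops. This is
possible as long as `len r > len b`, and also when `len r = len b` and `ε_a ε_b = 1`, the two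
monomials of `m` then coinciding. A nonzero `u` with symmetry of type `ε z^c` has
`deg u + ldeg u = c`, hence `len u ≡ c (mod 2)`, which rules out `len r = len b` when `c_a - c_b`
is odd. -/

lemma coeff_add (u v : LP) (k : ℤ) : coeff (u + v) k = coeff u k + coeff v k := rfl

lemma coeff_sub (u v : LP) (k : ℤ) : coeff (u - v) k = coeff u k - coeff v k := rfl

lemma coeff_C_mul_T (t : ℂ) (s k : ℤ) : coeff (C t * T s) k = if s = k then t else 0 := by
  rw [← single_eq_C_mul_T]
  exact Finsupp.single_apply

lemma coeff_mul_C_mul_T (f : LP) (t : ℂ) (s k : ℤ) :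
    coeff (f * (C t * T s)) k = coeff f (k - s) * t := by
  rw [← single_eq_C_mul_T]
  exact AddMonoidAlgebra.coeff_mul_single_apply f t s k

lemma Sgn.mul {ε ε' : ℂ} (h : Sgn ε) (h' : Sgn ε') : Sgn (ε * ε') := by
  rcases h with rfl | rfl <;> rcases h' with rfl | rfl <;> simp [Sgn]

lemma Sgn.mul_self {ε : ℂ} (h : Sgn ε) : ε * ε = 1 := by
  rcases h with rfl | rfl <;> norm_num

section SymT

variable {u v : LP} {ε ε' : ℂ} {c c' : ℤ}

lemma symT_iff_eq_mul_invert : SymT u ε c ↔ u = C ε * T c * invert u := by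
  have hcoeff : ∀ k, coeff (C ε * T c * invert u) k = ε * coeff u (c - k) := fun k => by
    rw [mul_comm, coeff_mul_C_mul_T, mul_comm, show c - k = -(k - c) by ring]
    exact congrArg _ (invert_apply u (k - c))
  refine ⟨fun h => LaurentPolynomial.ext fun k => (h k).trans (hcoeff k).symm, fun h k => ?_⟩
  rw [← hcoeff, ← h]

lemma symT_zero (ε : ℂ) (c : ℤ) : SymT 0 ε c := fun _ => (mul_zero ε).symm

lemma SymT.add (hu : SymT u ε c) (hv : SymT v ε c) : SymT (u + v) ε c := fun k => by
  rw [coeff_add, coeff_add, hu k, hv k, mul_add]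

lemma SymT.sub (hu : SymT u ε c) (hv : SymT v ε c) : SymT (u - v) ε c := fun k => by
  rw [coeff_sub, coeff_sub, hu k, hv k, mul_sub]

lemma SymT.mul (hu : SymT u ε c) (hv : SymT v ε' c') : SymT (u * v) (ε * ε') (c + c') := by
  rw [symT_iff_eq_mul_invert] at hu hv ⊢
  calc u * v = (C ε * T c * invert u) * (C ε' * T c' * invert v) := by rw [← hu, ← hv]
    _ = C (ε * ε') * T (c + c') * invert (u * v) := by
      rw [map_mul, map_mul, T_add]
      ring

lemma SymT.mul_of_quotient {b q : LP} {εa εb : ℂ} {ca cb : ℤ} (hεb : Sgn εb)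
    (hb : SymT b εb cb) (hq : SymT q (εa * εb) (ca - cb)) : SymT (b * q) εa ca := by
  have h := hb.mul hq
  rwa [show εb * (εa * εb) = εa by linear_combination εa * hεb.mul_self, add_sub_cancel] at h

lemma symT_symmetrized_monomial (hε : ε * ε = 1) (c e : ℤ) (t : ℂ) :
    SymT (C t * T e + C (ε * t) * T (c - e)) ε c := fun k => by
  simp only [coeff_add, coeff_C_mul_T, show e = c - k ↔ c - e = k by omega,
    show c - e = c - k ↔ e = k by omega]
  split_ifs <;> first | ring1 | linear_combination (-t) * hε

end SymT

section Degree

variable {u : LP} {k : ℤ}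

lemma le_degL (h : coeff u k ≠ 0) : k ≤ degL u := by
  have hu : u ≠ 0 := by rintro rfl; exact h rfl
  rw [degL, dif_neg hu]
  exact Finset.le_max' _ _ (Finsupp.mem_support_iff.mpr h)

lemma ldegL_le (h : coeff u k ≠ 0) : ldegL u ≤ k := by
  have hu : u ≠ 0 := by rintro rfl; exact h rfl
  rw [ldegL, dif_neg hu]
  exact Finset.min'_le _ _ (Finsupp.mem_support_iff.mpr h)

lemma coeff_degL_ne_zero (hu : u ≠ 0) : coeff u (degL u) ≠ 0 := by
  rw [degL, dif_neg hu]
  exact Finsupp.mem_support_iff.mp (Finset.max'_mem _ _)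

lemma coeff_ldegL_ne_zero (hu : u ≠ 0) : coeff u (ldegL u) ≠ 0 := by
  rw [ldegL, dif_neg hu]
  exact Finsupp.mem_support_iff.mp (Finset.min'_mem _ _)

lemma coeff_eq_zero_of_degL_lt (h : degL u < k) : coeff u k = 0 := by
  by_contra h0
  exact (le_degL h0).not_gt h

lemma degL_lt_of_coeff_eq_zero (hu : u ≠ 0) {d : ℤ} (h : ∀ k, d ≤ k → coeff u k = 0) :
    degL u < d := by
  by_contra! hd
  exact coeff_degL_ne_zero hu (h _ hd)

lemma lenL_zero : lenL 0 = ⊥ := if_pos rfl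

lemma lenL_of_ne_zero (hu : u ≠ 0) : lenL u = ((degL u - ldegL u : ℤ) : WithBot ℤ) := if_neg hu

lemma SymT.degL_add_ldegL {ε : ℂ} {c : ℤ} (h : SymT u ε c) (hu : u ≠ 0) :
    degL u + ldegL u = c := by
  have hmirror : ∀ k, coeff u k ≠ 0 → coeff u (c - k) ≠ 0 := fun k hk h0 =>
    hk (by rw [h k, h0, mul_zero])
  have := ldegL_le (hmirror _ (coeff_degL_ne_zero hu))
  have := le_degL (hmirror _ (coeff_ldegL_ne_zero hu))
  omega

end Degree

section Division

variable {b : LP} {εa εb : ℂ} {ca cb : ℤ}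

lemma exists_symT_cancel_top {r : LP} (hεab : Sgn (εa * εb)) (hr : SymT r εa ca)
    (hb : SymT b εb cb) (hr0 : r ≠ 0) (hb0 : b ≠ 0)
    (hle : degL b - ldegL b ≤ degL r - ldegL r)
    (heq : degL r - ldegL r = degL b - ldegL b → εa * εb = 1) :
    ∃ m, SymT m (εa * εb) (ca - cb) ∧ ∀ k, degL r ≤ k → coeff (r - b * m) k = 0 := by
  have hcr := hr.degL_add_ldegL hr0
  have hcb := hb.degL_add_ldegL hb0
  set e := degL r - degL b
  have hκ : coeff b (degL b) + εa * εb * coeff b (degL r - (ca - cb - e)) ≠ 0 := by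
    rcases hle.lt_or_eq with hlt | hwidth
    · rw [coeff_eq_zero_of_degL_lt (k := degL r - (ca - cb - e)) (by omega), mul_zero, add_zero]
      exact coeff_degL_ne_zero hb0
    · rw [show degL r - (ca - cb - e) = degL b by omega, heq hwidth.symm, one_mul, ← two_mul]
      exact mul_ne_zero two_ne_zero (coeff_degL_ne_zero hb0)
  set κ := coeff b (degL b) + εa * εb * coeff b (degL r - (ca - cb - e))
  set t := coeff r (degL r) / κ
  refine ⟨C t * T e + C (εa * εb * t) * T (ca - cb - e),
    symT_symmetrized_monomial hεab.mul_self _ _ _, fun k hk => ?_⟩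
  rw [coeff_sub, mul_add, coeff_add, coeff_mul_C_mul_T, coeff_mul_C_mul_T]
  rcases hk.eq_or_lt with rfl | hlt
  · rw [show degL r - e = degL b by omega]
    linear_combination (div_mul_cancel₀ (coeff r (degL r)) hκ).symm
  · rw [coeff_eq_zero_of_degL_lt hlt, coeff_eq_zero_of_degL_lt (k := k - e) (by omega),
      coeff_eq_zero_of_degL_lt (k := k - (ca - cb - e)) (by omega)]
    ring

lemma exists_symT_remainder (hεa : Sgn εa) (hεb : Sgn εb) (hb : SymT b εb cb) (hb0 : b ≠ 0)
    (a : LP) (ha : SymT a εa ca) :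
    ∃ q, SymT q (εa * εb) (ca - cb) ∧
      (lenL (a - b * q) < lenL b ∨ (lenL (a - b * q) = lenL b ∧ εa * εb ≠ 1)) := by
  induction hn : (degL a - ldegL a).toNat using Nat.strong_induction_on generalizing a with
  | _ n ih =>
  by_cases hdone : lenL a < lenL b ∨ (lenL a = lenL b ∧ εa * εb ≠ 1)
  · exact ⟨0, symT_zero _ _, by rwa [mul_zero, sub_zero]⟩
  push Not at hdone
  obtain ⟨hle, heq⟩ := hdone
  have ha0 : a ≠ 0 := by
    rintro rfl
    rw [lenL_zero, lenL_of_ne_zero hb0] at hle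
    exact WithBot.coe_ne_bot (le_bot_iff.mp hle)
  rw [lenL_of_ne_zero ha0, lenL_of_ne_zero hb0] at hle heq
  norm_cast at hle heq
  obtain ⟨m, hm, htop⟩ := exists_symT_cancel_top (hεa.mul hεb) ha hb ha0 hb0 hle heq
  have hr : SymT (a - b * m) εa ca := ha.sub (hb.mul_of_quotient hεb hm)
  by_cases hr0 : a - b * m = 0
  · refine ⟨m, hm, Or.inl ?_⟩
    rw [hr0, lenL_zero, lenL_of_ne_zero hb0]
    exact WithBot.bot_lt_coe _
  have hdeg := degL_lt_of_coeff_eq_zero hr0 htop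
  have := hr.degL_add_ldegL hr0
  have := ha.degL_add_ldegL ha0
  have := ldegL_le (coeff_degL_ne_zero hr0)
  obtain ⟨q, hq, hrem⟩ := ih _ (by omega) (a - b * m) hr rfl
  exact ⟨m + q, hm.add hq, by rwa [mul_add, ← sub_sub]⟩

end Division

/-- long division for Laurent polynomials with symmetry
(Lemma 3.5 of the paper). -/
theorem long_division_with_symmetry
    (a b : LP) (εa εb : ℂ) (ca cb : ℤ) (hεa : Sgn εa) (hεb : Sgn εb)
    (ha : SymT a εa ca) (hb : SymT b εb cb) (hb0 : b ≠ 0) :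
    ((εa * εb = 1 ∨ (εa * εb = -1 ∧ Odd (ca - cb))) →
      ∃ q : LP, SymT q (εa * εb) (ca - cb) ∧
        SymT (a - b * q) εa ca ∧ lenL (a - b * q) < lenL b) ∧
    ((εa * εb = -1 ∧ Even (ca - cb)) →
      ∃ q : LP, SymT q (εa * εb) (ca - cb) ∧
        SymT (a - b * q) εa ca ∧ lenL (a - b * q) ≤ lenL b) := by
  obtain ⟨q, hq, hrem⟩ := exists_symT_remainder hεa hεb hb hb0 a ha
  have hr : SymT (a - b * q) εa ca := ha.sub (hb.mul_of_quotient hεb hq)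
  refine ⟨fun hcase => ⟨q, hq, hr, ?_⟩, fun _ => ⟨q, hq, hr, ?_⟩⟩
  · rcases hrem with hlt | ⟨heq, hne⟩
    · exact hlt
    obtain h1 | ⟨-, ⟨j, hj⟩⟩ := hcase
    · exact absurd h1 hne
    have hr0 : a - b * q ≠ 0 := by
      rintro h0
      rw [h0, lenL_zero, lenL_of_ne_zero hb0] at heq
      exact WithBot.bot_ne_coe heq
    rw [lenL_of_ne_zero hr0, lenL_of_ne_zero hb0, WithBot.coe_inj] at heq
    have := hr.degL_add_ldegL hr0
    have := hb.degL_add_ldegL hb0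
    omega
  · rcases hrem with hlt | ⟨heq, -⟩
    · exact hlt.le
    · exact heq.le

end QT
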